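/- Let s₀ be a global state of n robots whose visibility graph is connected, and let s₀, s₁, s₂, … be the synchronous execution of Algorithm II (s_{t+1} is obtained from s_t by simultaneously moving every robot at a II-enabled vertex to its Algorithm-II target, and s_{t+1}=s_t if no vertex is II-enabled). Then: (a) if at least two distinct vertices are occupied in s_t, every occupied vertex of s_t with maximal y-coordinate q+p/2 is II-enabled and max{q+p/2 : occupied in s_{t+1}} ≤ max{q+p/2 : occupied in s_t} − 1/2; and (b) for every t ≥ 2n, all n robots occupy the single vertex Q(s₀) = (c(s₀)−d(s₀), d(s₀)); that is, Algorithm II gathers the robots at Q within 2n rounds. -/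
import Mathlib


open scoped Classical

namespace GSGS

/-- Vertices of the infinite triangular grid, coordinatized by ℤ × ℤ. -/
abbrev V : Type := ℤ × ℤ

/-- down neighbour -/
def v1 (i : V) : V := (i.1, i.2 - 1)
/-- up neighbour -/
def v4 (i : V) : V := (i.1, i.2 + 1)
/-- down-left neighbour -/
def v2l (i : V) : V := (i.1 - 1, i.2)
/-- down-right neighbour -/
def v2r (i : V) : V := (i.1 + 1, i.2 - 1)
/-- up-left neighbour -/
def v3l (i : V) : V := (i.1 - 1, i.2 + 1)
/-- up-right neighbour -/
def v3r (i : V) : V := (i.1 + 1, i.2)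

/-- Adjacency on the triangular grid. -/
def Adj (a b : V) : Prop :=
  b = v1 a ∨ b = v2l a ∨ b = v2r a ∨ b = v3l a ∨ b = v3r a ∨ b = v4 a

/-- y-coordinate of a vertex (p,q) is q + p/2. -/
def yC (v : V) : ℚ := (v.2 : ℚ) + (v.1 : ℚ) / 2

/-- A global state of n robots is a function `Fin n → V`; a vertex is occupied
iff some robot is at it. -/
def Occ {n : ℕ} (s : Fin n → V) (x : V) : Prop := ∃ r, s r = x

/-- Only-At(i, L): the occupied neighbours of i are exactly those in L. -/
def OnlyAt (occ : V → Prop) (i : V) (L : Set V) : Prop :=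
  ∀ j, Adj i j → (occ j ↔ j ∈ L)

def Extreme (occ : V → Prop) (i : V) : Prop :=
  ¬ occ (v4 i) ∧ ((occ (v2r i) ∨ occ (v3r i)) → (¬ occ (v2l i) ∧ ¬ occ (v3l i)))

def Terminating (occ : V → Prop) (i : V) : Prop :=
  Extreme occ i ∧ ∀ j, Adj i j → ¬ occ j

def Staying (occ : V → Prop) (i : V) : Prop :=
  Extreme occ i ∧
    (OnlyAt occ i {v3r i} ∨ OnlyAt occ i {v3l i} ∨
     OnlyAt occ i {v1 i, v3r i} ∨ OnlyAt occ i {v1 i, v3l i})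

def Downward (occ : V → Prop) (i : V) : Prop :=
  Extreme occ i ∧ occ (v1 i) ∧ ¬ occ (v3r i) ∧ ¬ occ (v3l i)

def DownslantRight (occ : V → Prop) (i : V) : Prop :=
  Extreme occ i ∧ ¬ Downward occ i ∧ ¬ Staying occ i ∧ ¬ Terminating occ i ∧ occ (v2r i)

def DownslantLeft (occ : V → Prop) (i : V) : Prop :=
  Extreme occ i ∧ ¬ Downward occ i ∧ ¬ Staying occ i ∧ ¬ Terminating occ i ∧ occ (v2l i)

def NonExtreme (occ : V → Prop) (i : V) : Prop :=
  ¬ Extreme occ i ∧ occ (v2r i) ∧ occ (v2l i) ∧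
    ¬ occ (v3r i) ∧ ¬ occ (v3l i) ∧ ¬ occ (v4 i)

def Impedensable (occ : V → Prop) (i : V) : Prop :=
  Downward occ i ∨ DownslantRight occ i ∨ DownslantLeft occ i ∨ NonExtreme occ i

/-- The prescribed target of an impedensable robot under the GSGS algorithm:
v₂^r(i) if Downslant-Right(i), v₂^ℓ(i) if Downslant-Left(i), and v₁(i) in the
Downward / Non-Extreme cases. -/
noncomputable def target (occ : V → Prop) (i : V) : V :=
  if DownslantRight occ i then v2r i
  else if DownslantLeft occ i then v2l i
  else v1 i

/-- A step of the GSGS algorithm: a nonempty set M of robots at impedensable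
vertices simultaneously move to their prescribed targets; all others stay. -/
def Step {n : ℕ} (s s' : Fin n → V) : Prop :=
  ∃ M : Set (Fin n), M.Nonempty ∧
    (∀ r ∈ M, Impedensable (Occ s) (s r)) ∧
    ∀ r, s' r = if r ∈ M then target (Occ s) (s r) else s r

/-- The synchronous step: every robot at an impedensable vertex moves. -/
def SyncStep {n : ℕ} (s s' : Fin n → V) : Prop :=
  ∀ r, s' r = if Impedensable (Occ s) (s r) then target (Occ s) (s r) else s r

/-- Connectivity of the visibility graph induced on the occupied vertices. -/
def ConnectedOcc (occ : V → Prop) : Prop :=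
  ∀ a b, occ a → occ b →
    Relation.ReflTransGen (fun x y => occ x ∧ occ y ∧ Adj x y) a b

/-- Minimum of f over the occupied vertices. -/
noncomputable def minVal {n : ℕ} {α : Type*} [LinearOrder α]
    (s : Fin n → V) (f : V → α) (hn : Nonempty (Fin n)) : α :=
  (Finset.image (fun r => f (s r)) Finset.univ).min'
    ((Finset.univ_nonempty_iff.mpr hn).image _)

/-- Maximum of f over the occupied vertices. -/
noncomputable def maxVal {n : ℕ} {α : Type*} [LinearOrder α]
    (s : Fin n → V) (f : V → α) (hn : Nonempty (Fin n)) : α :=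
  (Finset.image (fun r => f (s r)) Finset.univ).max'
    ((Finset.univ_nonempty_iff.mpr hn).image _)

/-- Algorithm II guards. -/
def DownwardII (occ : V → Prop) (i : V) : Prop :=
  (occ (v1 i) ∧ ¬ occ (v3l i) ∧ ¬ occ (v4 i) ∧ ¬ occ (v3r i)) ∨
    OnlyAt occ i {v2l i, v2r i}

def DownslantLeftII (occ : V → Prop) (i : V) : Prop := OnlyAt occ i {v2l i}

def DownslantRightII (occ : V → Prop) (i : V) : Prop := OnlyAt occ i {v2r i}

def IIEnabled (occ : V → Prop) (i : V) : Prop :=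
  DownwardII occ i ∨ DownslantRightII occ i ∨ DownslantLeftII occ i

/-- The prescribed target under Algorithm II. -/
noncomputable def targetII (occ : V → Prop) (i : V) : V :=
  if DownslantRightII occ i then v2r i
  else if DownslantLeftII occ i then v2l i
  else v1 i

/-- The synchronous step of Algorithm II. -/
def SyncStepII {n : ℕ} (s s' : Fin n → V) : Prop :=
  ∀ r, s' r = if IIEnabled (Occ s) (s r) then targetII (Occ s) (s r) else s r

/-! ### Auxiliary lemmas -/

section Basics

lemma adj_coord {a b : V} : Adj a b ↔
    ((b.1 = a.1 ∧ b.2 = a.2 - 1) ∨ (b.1 = a.1 - 1 ∧ b.2 = a.2) ∨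
     (b.1 = a.1 + 1 ∧ b.2 = a.2 - 1) ∨ (b.1 = a.1 - 1 ∧ b.2 = a.2 + 1) ∨
     (b.1 = a.1 + 1 ∧ b.2 = a.2) ∨ (b.1 = a.1 ∧ b.2 = a.2 + 1)) := by
  simp [Adj, v1, v2l, v2r, v3l, v3r, v4, Prod.ext_iff]

lemma adj_symm {a b : V} (h : Adj a b) : Adj b a := by
  rw [adj_coord] at h ⊢; omega

lemma adj_v1 (i : V) : Adj i (v1 i) := Or.inl rfl
lemma adj_v2l (i : V) : Adj i (v2l i) := Or.inr (Or.inl rfl)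
lemma adj_v2r (i : V) : Adj i (v2r i) := Or.inr (Or.inr (Or.inl rfl))
lemma adj_v3l (i : V) : Adj i (v3l i) := Or.inr (Or.inr (Or.inr (Or.inl rfl)))
lemma adj_v3r (i : V) : Adj i (v3r i) := Or.inr (Or.inr (Or.inr (Or.inr (Or.inl rfl))))
lemma adj_v4 (i : V) : Adj i (v4 i) := Or.inr (Or.inr (Or.inr (Or.inr (Or.inr rfl))))

lemma yC_v1 (i : V) : yC (v1 i) = yC i - 1 := by simp [yC, v1]; push_cast; ring
lemma yC_v2l (i : V) : yC (v2l i) = yC i - 1/2 := by simp [yC, v2l]; push_cast; ring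
lemma yC_v2r (i : V) : yC (v2r i) = yC i - 1/2 := by simp [yC, v2r]; push_cast; ring
lemma yC_v3l (i : V) : yC (v3l i) = yC i + 1/2 := by simp [yC, v3l]; push_cast; ring
lemma yC_v3r (i : V) : yC (v3r i) = yC i + 1/2 := by simp [yC, v3r]; push_cast; ring
lemma yC_v4 (i : V) : yC (v4 i) = yC i + 1 := by simp [yC, v4]; push_cast; ring

lemma yC_eq (v : V) : yC v = ((2 * v.2 + v.1 : ℤ) : ℚ) / 2 := by
  simp [yC]; push_cast; ring

lemma yC_half {a b : V} (h : yC a < yC b) : yC a ≤ yC b - 1/2 := by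
  rw [yC_eq] at h ⊢
  rw [yC_eq b] at h ⊢
  have h' : (2 * a.2 + a.1 : ℤ) < 2 * b.2 + b.1 := by exact_mod_cast (by linarith : ((2*a.2+a.1 : ℤ):ℚ) < ((2*b.2+b.1 : ℤ):ℚ))
  have h'' : (2 * a.2 + a.1 : ℤ) ≤ 2 * b.2 + b.1 - 1 := by omega
  have : ((2 * a.2 + a.1 : ℤ) : ℚ) ≤ ((2 * b.2 + b.1 - 1 : ℤ) : ℚ) := by exact_mod_cast h''
  push_cast at this ⊢
  linarith

end Basics

section Guards

variable {occ : V → Prop} {i : V}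

lemma mem2_ne (i : V) {j : V}
    (hj : j = v1 i ∨ j = v3l i ∨ j = v3r i ∨ j = v4 i) :
    j ∉ ({v2l i, v2r i} : Set V) := by
  simp only [Set.mem_insert_iff, Set.mem_singleton_iff]
  rcases hj with rfl | rfl | rfl | rfl <;>
    simp [v1, v2l, v2r, v3l, v3r, v4, Prod.ext_iff] <;> omega

lemma meml_ne (i : V) {j : V}
    (hj : j = v1 i ∨ j = v2r i ∨ j = v3l i ∨ j = v3r i ∨ j = v4 i) :
    j ∉ ({v2l i} : Set V) := by
  simp only [Set.mem_singleton_iff]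
  rcases hj with rfl | rfl | rfl | rfl | rfl <;>
    simp [v1, v2l, v2r, v3l, v3r, v4, Prod.ext_iff] <;> omega

lemma memr_ne (i : V) {j : V}
    (hj : j = v1 i ∨ j = v2l i ∨ j = v3l i ∨ j = v3r i ∨ j = v4 i) :
    j ∉ ({v2r i} : Set V) := by
  simp only [Set.mem_singleton_iff]
  rcases hj with rfl | rfl | rfl | rfl | rfl <;>
    simp [v1, v2l, v2r, v3l, v3r, v4, Prod.ext_iff] <;> omega

/-- occupancy pattern forced by `OnlyAt occ i {v2l i, v2r i}`. -/
lemma onlyAt2_occ (h : OnlyAt occ i {v2l i, v2r i}) :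
    occ (v2l i) ∧ occ (v2r i) ∧ ¬ occ (v1 i) ∧ ¬ occ (v3l i) ∧ ¬ occ (v3r i) ∧ ¬ occ (v4 i) :=
  ⟨(h _ (adj_v2l i)).2 (by simp), (h _ (adj_v2r i)).2 (by simp),
   fun hc => mem2_ne i (Or.inl rfl) ((h _ (adj_v1 i)).1 hc),
   fun hc => mem2_ne i (Or.inr (Or.inl rfl)) ((h _ (adj_v3l i)).1 hc),
   fun hc => mem2_ne i (Or.inr (Or.inr (Or.inl rfl))) ((h _ (adj_v3r i)).1 hc),
   fun hc => mem2_ne i (Or.inr (Or.inr (Or.inr rfl))) ((h _ (adj_v4 i)).1 hc)⟩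

lemma dsl_occ (h : DownslantLeftII occ i) :
    occ (v2l i) ∧ ¬ occ (v1 i) ∧ ¬ occ (v2r i) ∧ ¬ occ (v3l i) ∧ ¬ occ (v3r i) ∧ ¬ occ (v4 i) :=
  ⟨(h _ (adj_v2l i)).2 rfl,
   fun hc => meml_ne i (Or.inl rfl) ((h _ (adj_v1 i)).1 hc),
   fun hc => meml_ne i (Or.inr (Or.inl rfl)) ((h _ (adj_v2r i)).1 hc),
   fun hc => meml_ne i (Or.inr (Or.inr (Or.inl rfl))) ((h _ (adj_v3l i)).1 hc),
   fun hc => meml_ne i (Or.inr (Or.inr (Or.inr (Or.inl rfl)))) ((h _ (adj_v3r i)).1 hc),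
   fun hc => meml_ne i (Or.inr (Or.inr (Or.inr (Or.inr rfl)))) ((h _ (adj_v4 i)).1 hc)⟩

lemma dsr_occ (h : DownslantRightII occ i) :
    occ (v2r i) ∧ ¬ occ (v1 i) ∧ ¬ occ (v2l i) ∧ ¬ occ (v3l i) ∧ ¬ occ (v3r i) ∧ ¬ occ (v4 i) :=
  ⟨(h _ (adj_v2r i)).2 rfl,
   fun hc => memr_ne i (Or.inl rfl) ((h _ (adj_v1 i)).1 hc),
   fun hc => memr_ne i (Or.inr (Or.inl rfl)) ((h _ (adj_v2l i)).1 hc),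
   fun hc => memr_ne i (Or.inr (Or.inr (Or.inl rfl))) ((h _ (adj_v3l i)).1 hc),
   fun hc => memr_ne i (Or.inr (Or.inr (Or.inr (Or.inl rfl)))) ((h _ (adj_v3r i)).1 hc),
   fun hc => memr_ne i (Or.inr (Or.inr (Or.inr (Or.inr rfl)))) ((h _ (adj_v4 i)).1 hc)⟩

lemma downward_occ (h : DownwardII occ i) :
    ¬ occ (v3l i) ∧ ¬ occ (v3r i) ∧ ¬ occ (v4 i) ∧
      (occ (v1 i) ∨ (occ (v2l i) ∧ occ (v2r i))) := by
  rcases h with ⟨h1, h3l, h4, h3r⟩ | h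
  · exact ⟨h3l, h3r, h4, Or.inl h1⟩
  · obtain ⟨a, b, _, c, d, f⟩ := onlyAt2_occ h
    exact ⟨c, d, f, Or.inr ⟨a, b⟩⟩

lemma enabled_not_up (h : IIEnabled occ i) :
    ¬ occ (v4 i) ∧ ¬ occ (v3l i) ∧ ¬ occ (v3r i) := by
  rcases h with h | h | h
  · obtain ⟨a, b, c, _⟩ := downward_occ h; exact ⟨c, a, b⟩
  · obtain ⟨_, _, _, a, b, c⟩ := dsr_occ h; exact ⟨c, a, b⟩
  · obtain ⟨_, _, _, a, b, c⟩ := dsl_occ h; exact ⟨c, a, b⟩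

/-- Constructors for OnlyAt from full occupancy information. -/
lemma onlyAt2_mk (h2l : occ (v2l i)) (h2r : occ (v2r i)) (h1 : ¬ occ (v1 i))
    (h3l : ¬ occ (v3l i)) (h3r : ¬ occ (v3r i)) (h4 : ¬ occ (v4 i)) :
    OnlyAt occ i {v2l i, v2r i} := by
  intro j hadj
  rcases hadj with rfl | rfl | rfl | rfl | rfl | rfl
  · exact iff_of_false h1 (mem2_ne i (Or.inl rfl))
  · exact iff_of_true h2l (by simp)
  · exact iff_of_true h2r (by simp)
  · exact iff_of_false h3l (mem2_ne i (Or.inr (Or.inl rfl)))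
  · exact iff_of_false h3r (mem2_ne i (Or.inr (Or.inr (Or.inl rfl))))
  · exact iff_of_false h4 (mem2_ne i (Or.inr (Or.inr (Or.inr rfl))))

lemma onlyAtL_mk (h2l : occ (v2l i)) (h1 : ¬ occ (v1 i)) (h2r : ¬ occ (v2r i))
    (h3l : ¬ occ (v3l i)) (h3r : ¬ occ (v3r i)) (h4 : ¬ occ (v4 i)) :
    OnlyAt occ i {v2l i} := by
  intro j hadj
  rcases hadj with rfl | rfl | rfl | rfl | rfl | rfl
  · exact iff_of_false h1 (meml_ne i (Or.inl rfl))
  · exact iff_of_true h2l rfl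
  · exact iff_of_false h2r (meml_ne i (Or.inr (Or.inl rfl)))
  · exact iff_of_false h3l (meml_ne i (Or.inr (Or.inr (Or.inl rfl))))
  · exact iff_of_false h3r (meml_ne i (Or.inr (Or.inr (Or.inr (Or.inl rfl)))))
  · exact iff_of_false h4 (meml_ne i (Or.inr (Or.inr (Or.inr (Or.inr rfl)))))

lemma onlyAtR_mk (h2r : occ (v2r i)) (h1 : ¬ occ (v1 i)) (h2l : ¬ occ (v2l i))
    (h3l : ¬ occ (v3l i)) (h3r : ¬ occ (v3r i)) (h4 : ¬ occ (v4 i)) :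
    OnlyAt occ i {v2r i} := by
  intro j hadj
  rcases hadj with rfl | rfl | rfl | rfl | rfl | rfl
  · exact iff_of_false h1 (memr_ne i (Or.inl rfl))
  · exact iff_of_false h2l (memr_ne i (Or.inr (Or.inl rfl)))
  · exact iff_of_true h2r rfl
  · exact iff_of_false h3l (memr_ne i (Or.inr (Or.inr (Or.inl rfl))))
  · exact iff_of_false h3r (memr_ne i (Or.inr (Or.inr (Or.inr (Or.inl rfl)))))
  · exact iff_of_false h4 (memr_ne i (Or.inr (Or.inr (Or.inr (Or.inr rfl)))))

end Guards

section Step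

variable {occ : V → Prop}

/-- Where a robot at an occupied vertex ends up after one synchronous round. -/
noncomputable def stepf (occ : V → Prop) (i : V) : V :=
  if IIEnabled occ i then targetII occ i else i

lemma syncStep_stepf {n : ℕ} {s s' : Fin n → V} (h : SyncStepII s s') (r : Fin n) :
    s' r = stepf (Occ s) (s r) := by
  rw [h r]; rfl

lemma stepf_spec (occ : V → Prop) (i : V) :
    (stepf occ i = i ∧ ¬ IIEnabled occ i) ∨
    (stepf occ i = v2r i ∧ DownslantRightII occ i) ∨
    (stepf occ i = v2l i ∧ DownslantLeftII occ i) ∨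
    (stepf occ i = v1 i ∧ DownwardII occ i) := by
  unfold stepf targetII
  by_cases hE : IIEnabled occ i
  · by_cases hR : DownslantRightII occ i
    · simp [hE, hR]
    · by_cases hL : DownslantLeftII occ i
      · simp [hE, hR, hL]
      · have hD : DownwardII occ i := by
          rcases hE with h | h | h
          · exact h
          · exact absurd h hR
          · exact absurd h hL
        simp [hE, hR, hL, hD]
  · simp [hE]

lemma stepf_stay_of_up {y : V}
    (h : occ (v4 y) ∨ occ (v3l y) ∨ occ (v3r y)) : stepf occ y = y := by
  unfold stepf
  rw [if_neg]
  intro hE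
  have := enabled_not_up hE
  tauto

lemma stepf_of_occ_v1 {x : V} (h : occ (v1 x)) :
    stepf occ x = x ∨ stepf occ x = v1 x := by
  rcases stepf_spec occ x with ⟨he, _⟩ | ⟨he, hg⟩ | ⟨he, hg⟩ | ⟨he, _⟩
  · exact Or.inl he
  · exact absurd h (dsr_occ hg).2.1
  · exact absurd h (dsl_occ hg).2.1
  · exact Or.inr he

lemma stepf_of_occ_v2l {x : V} (h : occ (v2l x)) :
    stepf occ x = x ∨ stepf occ x = v1 x ∨ stepf occ x = v2l x := by
  rcases stepf_spec occ x with ⟨he, _⟩ | ⟨he, hg⟩ | ⟨he, _⟩ | ⟨he, _⟩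
  · exact Or.inl he
  · exact absurd h (dsr_occ hg).2.2.1
  · exact Or.inr (Or.inr he)
  · exact Or.inr (Or.inl he)

lemma stepf_of_occ_v2r {x : V} (h : occ (v2r x)) :
    stepf occ x = x ∨ stepf occ x = v1 x ∨ stepf occ x = v2r x := by
  rcases stepf_spec occ x with ⟨he, _⟩ | ⟨he, _⟩ | ⟨he, hg⟩ | ⟨he, _⟩
  · exact Or.inl he
  · exact Or.inr (Or.inr he)
  · exact absurd h (dsl_occ hg).2.2.1
  · exact Or.inr (Or.inl he)

end Step

section Connect

variable {n : ℕ}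

lemma occ_stepf {s s' : Fin n → V} (h : SyncStepII s s') {x : V} (hx : Occ s x) :
    Occ s' (stepf (Occ s) x) := by
  obtain ⟨r, hr⟩ := hx
  exact ⟨r, by rw [syncStep_stepf h r, hr]⟩

lemma edge_pres {s s' : Fin n → V} (h : SyncStepII s s') {x y : V}
    (hx : Occ s x) (hy : Occ s y) (hadj : Adj x y) :
    Relation.ReflTransGen (fun a b => Occ s' a ∧ Occ s' b ∧ Adj a b)
      (stepf (Occ s) x) (stepf (Occ s) y) := by
  have Hx := occ_stepf h hx
  have Hy := occ_stepf h hy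
  rcases hadj with rfl | rfl | rfl | rfl | rfl | rfl
  -- y = v1 x
  · have hyst : stepf (Occ s) (v1 x) = v1 x :=
      stepf_stay_of_up (Or.inl (by rwa [show v4 (v1 x) = x by simp [v4, v1]]))
    rcases stepf_of_occ_v1 (occ := Occ s) hy with hst | hst
    · rw [hyst] at Hy ⊢; rw [hst] at Hx ⊢
      exact Relation.ReflTransGen.single ⟨Hx, Hy, adj_v1 x⟩
    · rw [hyst, hst]
  -- y = v2l x
  · have hyst : stepf (Occ s) (v2l x) = v2l x :=
      stepf_stay_of_up (Or.inr (Or.inr (by rwa [show v3r (v2l x) = x by simp [v3r, v2l]])))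
    rcases stepf_of_occ_v2l (occ := Occ s) hy with hst | hst | hst
    · rw [hyst] at Hy ⊢; rw [hst] at Hx ⊢
      exact Relation.ReflTransGen.single ⟨Hx, Hy, adj_v2l x⟩
    · rw [hyst] at Hy ⊢; rw [hst] at Hx ⊢
      refine Relation.ReflTransGen.single ⟨Hx, Hy, ?_⟩
      rw [adj_coord]; simp [v1, v2l] <;> omega
    · rw [hyst, hst]
  -- y = v2r x
  · have hyst : stepf (Occ s) (v2r x) = v2r x :=
      stepf_stay_of_up (Or.inr (Or.inl (by rwa [show v3l (v2r x) = x by simp [v3l, v2r]])))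
    rcases stepf_of_occ_v2r (occ := Occ s) hy with hst | hst | hst
    · rw [hyst] at Hy ⊢; rw [hst] at Hx ⊢
      exact Relation.ReflTransGen.single ⟨Hx, Hy, adj_v2r x⟩
    · rw [hyst] at Hy ⊢; rw [hst] at Hx ⊢
      refine Relation.ReflTransGen.single ⟨Hx, Hy, ?_⟩
      rw [adj_coord]; simp [v1, v2r] <;> omega
    · rw [hyst, hst]
  -- y = v3l x : x = v2r y
  · have hxst : stepf (Occ s) x = x := stepf_stay_of_up (Or.inr (Or.inl hy))
    have hx' : Occ s (v2r (v3l x)) := by rwa [show v2r (v3l x) = x by simp [v2r, v3l]]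
    rcases stepf_of_occ_v2r (occ := Occ s) hx' with hst | hst | hst
    · rw [hxst] at Hx ⊢; rw [hst] at Hy ⊢
      exact Relation.ReflTransGen.single ⟨Hx, Hy, adj_v3l x⟩
    · rw [hxst] at Hx ⊢; rw [hst] at Hy ⊢
      refine Relation.ReflTransGen.single ⟨Hx, Hy, ?_⟩
      rw [adj_coord]; simp [v1, v3l] <;> omega
    · rw [hxst, hst, show v2r (v3l x) = x by simp [v2r, v3l]]
  -- y = v3r x : x = v2l y
  · have hxst : stepf (Occ s) x = x := stepf_stay_of_up (Or.inr (Or.inr hy))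
    have hx' : Occ s (v2l (v3r x)) := by rwa [show v2l (v3r x) = x by simp [v2l, v3r]]
    rcases stepf_of_occ_v2l (occ := Occ s) hx' with hst | hst | hst
    · rw [hxst] at Hx ⊢; rw [hst] at Hy ⊢
      exact Relation.ReflTransGen.single ⟨Hx, Hy, adj_v3r x⟩
    · rw [hxst] at Hx ⊢; rw [hst] at Hy ⊢
      refine Relation.ReflTransGen.single ⟨Hx, Hy, ?_⟩
      rw [adj_coord]; simp [v1, v3r] <;> omega
    · rw [hxst, hst, show v2l (v3r x) = x by simp [v2l, v3r]]
  -- y = v4 x : x = v1 y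
  · have hxst : stepf (Occ s) x = x := stepf_stay_of_up (Or.inl hy)
    have hx' : Occ s (v1 (v4 x)) := by rwa [show v1 (v4 x) = x by simp [v1, v4]]
    rcases stepf_of_occ_v1 (occ := Occ s) hx' with hst | hst
    · rw [hxst] at Hx ⊢; rw [hst] at Hy ⊢
      exact Relation.ReflTransGen.single ⟨Hx, Hy, adj_v4 x⟩
    · rw [hxst, hst, show v1 (v4 x) = x by simp [v1, v4]]

lemma path_pres {s s' : Fin n → V} (h : SyncStepII s s') {a b : V}
    (hpath : Relation.ReflTransGen (fun x y => Occ s x ∧ Occ s y ∧ Adj x y) a b) :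
    Relation.ReflTransGen (fun x y => Occ s' x ∧ Occ s' y ∧ Adj x y)
      (stepf (Occ s) a) (stepf (Occ s) b) := by
  induction hpath with
  | refl => exact Relation.ReflTransGen.refl
  | tail hab hedge ih =>
      exact ih.trans (edge_pres h hedge.1 hedge.2.1 hedge.2.2)

lemma conn_pres {s s' : Fin n → V} (h : SyncStepII s s')
    (hc : ConnectedOcc (Occ s)) : ConnectedOcc (Occ s') := by
  intro a' b' ha' hb'
  obtain ⟨ra, hra⟩ := ha'
  obtain ⟨rb, hrb⟩ := hb'
  rw [syncStep_stepf h ra] at hra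
  rw [syncStep_stepf h rb] at hrb
  rw [← hra, ← hrb]
  exact path_pres h (hc (s ra) (s rb) ⟨ra, rfl⟩ ⟨rb, rfl⟩)

end Connect

section TopEnabled

lemma top_enabled {occ : V → Prop} (hconn : ConnectedOcc occ)
    {i b : V} (hi : occ i) (hb : occ b) (hne : b ≠ i)
    (hmax : ∀ j, occ j → yC j ≤ yC i) : IIEnabled occ i := by
  have h4 : ¬ occ (v4 i) := fun hcc => by
    have := hmax _ hcc; rw [yC_v4] at this; linarith
  have h3l : ¬ occ (v3l i) := fun hcc => by
    have := hmax _ hcc; rw [yC_v3l] at this; linarith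
  have h3r : ¬ occ (v3r i) := fun hcc => by
    have := hmax _ hcc; rw [yC_v3r] at this; linarith
  obtain ⟨j, hj, hadj⟩ : ∃ j, occ j ∧ Adj i j := by
    rcases (hconn i b hi hb).cases_head with heq | ⟨c, ⟨_, hc, hadj⟩, _⟩
    · exact absurd heq.symm hne
    · exact ⟨c, hc, hadj⟩
  by_cases h1 : occ (v1 i)
  · exact Or.inl (Or.inl ⟨h1, h3l, h4, h3r⟩)
  · have hj' : j = v2l i ∨ j = v2r i := by
      rcases hadj with rfl | rfl | rfl | rfl | rfl | rfl
      · exact absurd hj h1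
      · exact Or.inl rfl
      · exact Or.inr rfl
      · exact absurd hj h3l
      · exact absurd hj h3r
      · exact absurd hj h4
    by_cases h2l : occ (v2l i) <;> by_cases h2r : occ (v2r i)
    · exact Or.inl (Or.inr (onlyAt2_mk h2l h2r h1 h3l h3r h4))
    · exact Or.inr (Or.inr (onlyAtL_mk h2l h1 h2r h3l h3r h4))
    · exact Or.inr (Or.inl (onlyAtR_mk h2r h1 h2l h3l h3r h4))
    · rcases hj' with rfl | rfl
      · exact absurd hj h2l
      · exact absurd hj h2r

end TopEnabled

section MinMax

variable {n : ℕ} {α : Type*} [LinearOrder α] {s : Fin n → V} {f : V → α}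
  {hne : Nonempty (Fin n)}

lemma minVal_le (r : Fin n) : minVal s f hne ≤ f (s r) :=
  Finset.min'_le _ _ (Finset.mem_image_of_mem _ (Finset.mem_univ r))

lemma le_minVal {b : α} (hb : ∀ r, b ≤ f (s r)) : b ≤ minVal s f hne := by
  apply Finset.le_min'
  intro y hy
  obtain ⟨r, -, rfl⟩ := Finset.mem_image.mp hy
  exact hb r

lemma exists_minVal : ∃ r, f (s r) = minVal s f hne := by
  obtain ⟨r, -, hr⟩ := Finset.mem_image.mp
    (Finset.min'_mem (Finset.image (fun r => f (s r)) Finset.univ)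
      ((Finset.univ_nonempty_iff.mpr hne).image _))
  exact ⟨r, hr⟩

lemma le_maxVal (r : Fin n) : f (s r) ≤ maxVal s f hne := by
  apply Finset.le_max'
  exact Finset.mem_image_of_mem _ (Finset.mem_univ r)

lemma maxVal_le {b : α} (hb : ∀ r, f (s r) ≤ b) : maxVal s f hne ≤ b := by
  apply Finset.max'_le
  intro y hy
  obtain ⟨r, -, rfl⟩ := Finset.mem_image.mp hy
  exact hb r

end MinMax

section Minima

variable {n : ℕ} {s s' : Fin n → V}

/-- robots on the bottom left-to-right slant stay on it, others stay weakly above. -/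
lemma step_pq {c : ℤ} (h : SyncStepII s s')
    (hc : ∀ v, Occ s v → c ≤ v.1 + v.2) (r : Fin n) :
    c ≤ (s' r).1 + (s' r).2 ∧ ((s r).1 + (s r).2 = c → (s' r).1 + (s' r).2 = c) := by
  rw [syncStep_stepf h r]
  have hx : Occ s (s r) := ⟨r, rfl⟩
  have hxc := hc _ hx
  rcases stepf_spec (Occ s) (s r) with ⟨he, -⟩ | ⟨he, hg⟩ | ⟨he, hg⟩ | ⟨he, hg⟩
  · rw [he]; exact ⟨hxc, fun h' => h'⟩
  · rw [he]; unfold v2r; constructor <;> simp <;> omega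
  · -- moves v2l : v2l is occupied, so s r is strictly above the slant
    have hocc := hc _ (dsl_occ hg).1
    unfold v2l at hocc
    rw [he]; unfold v2l; constructor <;> simp <;> omega
  · -- moves v1 : some neighbour below-left is occupied
    have : c ≤ (s r).1 + (s r).2 - 1 := by
      rcases (downward_occ hg).2.2.2 with h' | ⟨h', -⟩
      · have := hc _ h'; unfold v1 at this; omega
      · have := hc _ h'; unfold v2l at this; omega
    rw [he]; unfold v1; constructor <;> simp <;> omega

/-- robots on the bottom right-to-left slant stay on it, others stay weakly above. -/
lemma step_q {d : ℤ} (h : SyncStepII s s')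
    (hd : ∀ v, Occ s v → d ≤ v.2) (r : Fin n) :
    d ≤ (s' r).2 ∧ ((s r).2 = d → (s' r).2 = d) := by
  rw [syncStep_stepf h r]
  have hx : Occ s (s r) := ⟨r, rfl⟩
  have hxd := hd _ hx
  rcases stepf_spec (Occ s) (s r) with ⟨he, -⟩ | ⟨he, hg⟩ | ⟨he, hg⟩ | ⟨he, hg⟩
  · rw [he]; exact ⟨hxd, fun h' => h'⟩
  · have hocc := hd _ (dsr_occ hg).1
    unfold v2r at hocc
    rw [he]; unfold v2r; constructor <;> simp <;> omega
  · rw [he]; unfold v2l; constructor <;> simp <;> omega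
  · have : d ≤ (s r).2 - 1 := by
      rcases (downward_occ hg).2.2.2 with h' | ⟨-, h'⟩
      · have := hd _ h'; unfold v1 at this; omega
      · have := hd _ h'; unfold v2r at this; omega
    rw [he]; unfold v1; constructor <;> simp <;> omega

lemma minVal_pq_inv (h : SyncStepII s s') (hne : Nonempty (Fin n)) :
    minVal s' (fun v => v.1 + v.2) hne = minVal s (fun v => v.1 + v.2) hne := by
  set c := minVal s (fun v => v.1 + v.2) hne with hcdef
  have hc : ∀ v, Occ s v → c ≤ v.1 + v.2 := by
    rintro v ⟨r, rfl⟩; exact minVal_le r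
  apply le_antisymm
  · obtain ⟨r, hr⟩ := exists_minVal (s := s) (f := fun v => v.1 + v.2) (hne := hne)
    have := (step_pq h hc r).2 hr
    calc minVal s' (fun v => v.1 + v.2) hne ≤ (s' r).1 + (s' r).2 := minVal_le r
    _ = c := this
  · exact le_minVal (fun r => (step_pq h hc r).1)

lemma minVal_q_inv (h : SyncStepII s s') (hne : Nonempty (Fin n)) :
    minVal s' Prod.snd hne = minVal s Prod.snd hne := by
  set d := minVal s Prod.snd hne with hddef
  have hd : ∀ v, Occ s v → d ≤ v.2 := by
    rintro v ⟨r, rfl⟩; exact minVal_le r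
  apply le_antisymm
  · obtain ⟨r, hr⟩ := exists_minVal (s := s) (f := Prod.snd) (hne := hne)
    have := (step_q h hd r).2 hr
    calc minVal s' Prod.snd hne ≤ (s' r).2 := minVal_le r
    _ = d := this
  · exact le_minVal (fun r => (step_q h hd r).1)

end Minima

section Spread

lemma occ_interval {occ : V → Prop} (g : V → ℤ)
    (hg : ∀ a b, Adj a b → g b ≤ g a + 1)
    {a b : V} (ha : occ a)
    (hpath : Relation.ReflTransGen (fun x y => occ x ∧ occ y ∧ Adj x y) a b) :
    ∀ m, g a ≤ m → m ≤ g b → ∃ v, occ v ∧ g v = m := by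
  induction hpath with
  | refl => exact fun m h1 h2 => ⟨a, ha, le_antisymm h1 h2⟩
  | @tail x c hab hedge ih =>
      intro m h1 h2
      by_cases hm : m ≤ g x
      · exact ih m h1 hm
      · have := hg x c hedge.2.2
        exact ⟨c, hedge.2.1, by omega⟩

lemma spread_le {n : ℕ} {s : Fin n → V} (hne : Nonempty (Fin n))
    (hconn : ConnectedOcc (Occ s)) (g : V → ℤ)
    (hg : ∀ a b, Adj a b → g b ≤ g a + 1) (r : Fin n) :
    g (s r) ≤ minVal s g hne + (n - 1) := by
  obtain ⟨ra, hra⟩ := exists_minVal (s := s) (f := g) (hne := hne)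
  have hsub : Finset.Icc (g (s ra)) (g (s r)) ⊆
      Finset.image (fun r => g (s r)) Finset.univ := by
    intro m hm
    rw [Finset.mem_Icc] at hm
    obtain ⟨v, ⟨rv, hrv⟩, hgv⟩ :=
      occ_interval g hg (⟨ra, rfl⟩ : Occ s (s ra))
        (hconn (s ra) (s r) ⟨ra, rfl⟩ ⟨r, rfl⟩) m hm.1 hm.2
    exact Finset.mem_image.mpr ⟨rv, Finset.mem_univ _, by rw [hrv, hgv]⟩
  have hcard := Finset.card_le_card hsub
  rw [Int.card_Icc] at hcard
  have h2 : (Finset.image (fun r => g (s r)) Finset.univ).card ≤ n := by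
    calc _ ≤ Finset.univ.card := Finset.card_image_le
    _ = n := by simp
  rw [← hra]
  omega

lemma adj_q_le {a b : V} (h : Adj a b) : b.2 ≤ a.2 + 1 := by
  rw [adj_coord] at h; omega

lemma adj_pq_le {a b : V} (h : Adj a b) : b.1 + b.2 ≤ a.1 + a.2 + 1 := by
  rw [adj_coord] at h; omega

end Spread

section Gather

variable {n : ℕ}

lemma not_enabled_single {occ : V → Prop} {x : V} (hocc : ∀ y, occ y ↔ y = x) :
    ¬ IIEnabled occ x := by
  intro hE
  have hne1 : v1 x ≠ x := by simp [v1, Prod.ext_iff]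
  have hne2l : v2l x ≠ x := by simp [v2l, Prod.ext_iff]
  have hne2r : v2r x ≠ x := by simp [v2r, Prod.ext_iff]
  rcases hE with hD | hR | hL
  · rcases (downward_occ hD).2.2.2 with h | ⟨h, -⟩
    · exact hne1 ((hocc _).1 h)
    · exact hne2l ((hocc _).1 h)
  · exact hne2r ((hocc _).1 (dsr_occ hR).1)
  · exact hne2l ((hocc _).1 (dsl_occ hL).1)

lemma sync_fix {s s' : Fin n → V} (h : SyncStepII s s') {x : V}
    (hall : ∀ r, s r = x) (r : Fin n) : s' r = x := by
  have hocc : ∀ y, Occ s y ↔ y = x := by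
    intro y
    constructor
    · rintro ⟨r', rfl⟩; exact hall r'
    · rintro rfl; exact ⟨r, hall r⟩
  rw [h r, hall r, if_neg (not_enabled_single hocc)]

lemma minVal_const {α : Type*} [LinearOrder α] {s : Fin n → V} {f : V → α}
    {hne : Nonempty (Fin n)} {x : V} (hall : ∀ r, s r = x) :
    minVal s f hne = f x := by
  obtain ⟨r⟩ := id hne
  apply le_antisymm
  · calc minVal s f hne ≤ f (s r) := minVal_le r
    _ = f x := by rw [hall r]
  · exact le_minVal (fun r => by rw [hall r])

end Gather

section PartA

lemma partA {n : ℕ} {s s' : Fin n → V} (hne : Nonempty (Fin n))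
    (h : SyncStepII s s') (hconn : ConnectedOcc (Occ s))
    (htwo : ∃ a b : V, Occ s a ∧ Occ s b ∧ a ≠ b) :
    (∀ i, Occ s i → (∀ j, Occ s j → yC j ≤ yC i) → IIEnabled (Occ s) i) ∧
      maxVal s' yC hne ≤ maxVal s yC hne - 1/2 := by
  have henabled : ∀ i, Occ s i → (∀ j, Occ s j → yC j ≤ yC i) → IIEnabled (Occ s) i := by
    intro i hi hmaxi
    obtain ⟨a, b, ha, hb, hab⟩ := htwo
    by_cases hxa : a = i
    · exact top_enabled hconn hi hb (fun hbi => hab (hxa.trans hbi.symm)) hmaxi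
    · exact top_enabled hconn hi ha hxa hmaxi
  refine ⟨henabled, ?_⟩
  apply maxVal_le
  intro r
  have hmaxr : yC (s r) ≤ maxVal s yC hne := le_maxVal r
  rw [syncStep_stepf h r]
  rcases stepf_spec (Occ s) (s r) with ⟨he, hnE⟩ | ⟨he, -⟩ | ⟨he, -⟩ | ⟨he, -⟩
  · rw [he]
    by_contra hgt
    push_neg at hgt
    have htop : ∀ j, Occ s j → yC j ≤ yC (s r) := by
      intro j hj
      by_contra hlt
      push_neg at hlt
      have h1 := yC_half hlt
      have h2 : yC j ≤ maxVal s yC hne := by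
        obtain ⟨rj, hrj⟩ := hj
        rw [← hrj]
        exact le_maxVal rj
      linarith
    exact hnE (henabled _ ⟨r, rfl⟩ htop)
  · rw [he, yC_v2r]; linarith
  · rw [he, yC_v2l]; linarith
  · rw [he, yC_v1]; linarith

end PartA

/-- the synchronous execution of Algorithm II from a connected
state: (a) in every non-gathered state each topmost occupied vertex is
II-enabled and the top layer drops by at least 1/2 per round; (b) all robots
occupy Q(s₀) from round 2n onwards. -/
theorem stmt19 (n : ℕ) (hn : 0 < n) (e : ℕ → Fin n → V)
    (hconn : ConnectedOcc (Occ (e 0)))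
    (hexec : ∀ t, SyncStepII (e t) (e (t + 1))) :
    (∀ t, (∃ a b : V, Occ (e t) a ∧ Occ (e t) b ∧ a ≠ b) →
      ((∀ i, Occ (e t) i → (∀ j, Occ (e t) j → yC j ≤ yC i) →
          IIEnabled (Occ (e t)) i) ∧
        maxVal (e (t + 1)) yC (Fin.pos_iff_nonempty.mp hn) ≤
          maxVal (e t) yC (Fin.pos_iff_nonempty.mp hn) - 1/2)) ∧
    (∀ t, 2 * n ≤ t → ∀ r : Fin n,
      e t r =
        (minVal (e 0) (fun v => v.1 + v.2) (Fin.pos_iff_nonempty.mp hn) -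
           minVal (e 0) Prod.snd (Fin.pos_iff_nonempty.mp hn),
         minVal (e 0) Prod.snd (Fin.pos_iff_nonempty.mp hn))) := by
  have hne : Nonempty (Fin n) := Fin.pos_iff_nonempty.mp hn
  have hconn' : ∀ t, ConnectedOcc (Occ (e t)) := by
    intro t
    induction t with
    | zero => exact hconn
    | succ t ih => exact conn_pres (hexec t) ih
  constructor
  · exact fun t htwo => partA hne (hexec t) (hconn' t) htwo
  · have hinv : ∀ t,
        minVal (e t) (fun v => v.1 + v.2) hne = minVal (e 0) (fun v => v.1 + v.2) hne ∧
        minVal (e t) Prod.snd hne = minVal (e 0) Prod.snd hne := by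
      intro t
      induction t with
      | zero => exact ⟨rfl, rfl⟩
      | succ t ih =>
          exact ⟨(minVal_pq_inv (hexec t) hne).trans ih.1,
                 (minVal_q_inv (hexec t) hne).trans ih.2⟩
    set c := minVal (e 0) (fun v => v.1 + v.2) hne with hcdef
    set d := minVal (e 0) Prod.snd hne with hddef
    have hlow : ∀ t (r : Fin n), ((c : ℚ) + d) / 2 ≤ yC (e t r) := by
      intro t r
      have h1 : c ≤ (e t r).1 + (e t r).2 := by
        rw [← (hinv t).1]; exact minVal_le r
      have h2 : d ≤ (e t r).2 := by
        rw [← (hinv t).2]; exact minVal_le r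
      rw [yC_eq]
      have h3 : ((c + d : ℤ) : ℚ) ≤ ((2 * (e t r).2 + (e t r).1 : ℤ) : ℚ) := by
        exact_mod_cast (by omega : c + d ≤ 2 * (e t r).2 + (e t r).1)
      push_cast at h3 ⊢
      linarith
    have hup : ∀ r : Fin n, yC (e 0 r) ≤ ((c : ℚ) + d) / 2 + (n - 1) := by
      intro r
      have h1 := spread_le hne (hconn' 0) (fun v => v.1 + v.2)
        (fun a b hadj => adj_pq_le hadj) r
      have h2 := spread_le hne (hconn' 0) Prod.snd
        (fun a b hadj => adj_q_le hadj) r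
      rw [yC_eq]
      have h3 : ((2 * (e 0 r).2 + (e 0 r).1 : ℤ) : ℚ) ≤ ((c + d + 2 * ((n : ℤ) - 1) : ℤ) : ℚ) := by
        exact_mod_cast (by omega : (2 * (e 0 r).2 + (e 0 r).1 : ℤ) ≤ c + d + 2 * ((n : ℤ) - 1))
      push_cast at h3 ⊢
      linarith
    have hgather : ∃ t₀, t₀ ≤ 2 * n ∧ ∃ x : V, ∀ r, e t₀ r = x := by
      by_contra hcon
      push_neg at hcon
      have hdec : ∀ k, k ≤ 2 * n →
          maxVal (e k) yC hne ≤ maxVal (e 0) yC hne - (k : ℚ) / 2 := by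
        intro k
        induction k with
        | zero => intro _; simp
        | succ k ih =>
            intro hk
            have hk' : k ≤ 2 * n := by omega
            have htwo : ∃ a b : V, Occ (e k) a ∧ Occ (e k) b ∧ a ≠ b := by
              obtain ⟨r⟩ := id hne
              obtain ⟨r', hr'⟩ := hcon k hk' (e k r)
              exact ⟨e k r', e k r, ⟨r', rfl⟩, ⟨r, rfl⟩, hr'⟩
            have hstep := (partA hne (hexec k) (hconn' k) htwo).2
            have hih := ih hk'
            have : ((k + 1 : ℕ) : ℚ) = (k : ℚ) + 1 := by push_cast; ring
            rw [this]
            linarith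
      have hfin := hdec (2 * n) le_rfl
      obtain ⟨r⟩ := id hne
      have hl := hlow (2 * n) r
      have hm : yC (e (2 * n) r) ≤ maxVal (e (2 * n)) yC hne := le_maxVal r
      have hM : maxVal (e 0) yC hne ≤ ((c : ℚ) + d) / 2 + (n - 1) := maxVal_le hup
      have hcast : ((2 * n : ℕ) : ℚ) / 2 = (n : ℚ) := by push_cast; ring
      rw [hcast] at hfin
      have hn1 : (1 : ℚ) ≤ (n : ℚ) := by exact_mod_cast hn
      linarith
    obtain ⟨t₀, ht₀, x, hx⟩ := hgather
    have hstay : ∀ u (r : Fin n), e (t₀ + u) r = x := by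
      intro u
      induction u with
      | zero => exact hx
      | succ u ih => exact fun r => sync_fix (hexec (t₀ + u)) ih r
    have hxc : x.1 + x.2 = c := by
      have h1 := (hinv t₀).1
      rw [minVal_const (f := fun v => v.1 + v.2) hx] at h1
      exact h1
    have hxd : x.2 = d := by
      have h1 := (hinv t₀).2
      rw [minVal_const (f := Prod.snd) hx] at h1
      exact h1
    intro t ht r
    have h1 : e t r = x := by
      have h2 := hstay (t - t₀) r
      rwa [Nat.add_sub_cancel' (le_trans ht₀ ht)] at h2
    rw [h1]
    exact Prod.ext_iff.mpr ⟨(by omega : x.1 = c - d), hxd⟩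

end GSGS
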